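/- Let R > 0, K > 0 and a ∈ (0,R). Define U on the closed disk r ≤ R by U(x,y) = (KR/2)·(r²/a² − 1) for 0 ≤ r ≤ a, and U(x,y) = KR·ln(r/a) for a ≤ r ≤ R. Then U is continuously differentiable on the open disk r < R, U < 0 in the open disk r < a where it satisfies the wave equation ∂²U/∂x² − ∂²U/∂y² = 0, U > 0 in the open annulus a < r < R where it satisfies the Laplace equation ∂²U/∂x² + ∂²U/∂y² = 0, and the outward radial derivative ∂U/∂r equals K on the boundary circle r = R. Hence U is a type-changing solution of the Neumann problem for equation (1) with constant boundary flux K. -/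

import Mathlib

/-- Second partial derivative of `U` in the first (x) variable. -/
noncomputable def pxx (U : ℝ × ℝ → ℝ) (p : ℝ × ℝ) : ℝ :=
  deriv (deriv (fun x => U (x, p.2))) p.1

/-- Second partial derivative of `U` in the second (y) variable. -/
noncomputable def pyy (U : ℝ × ℝ → ℝ) (p : ℝ × ℝ) : ℝ :=
  deriv (deriv (fun y => U (p.1, y))) p.2

/-!
In terms of `s = x² + y²`, `U = G(s)` for a profile `G` that is affine for `s ≤ a²` and equal to
`KR (log s / 2 - log a)` beyond; both branches have slope `KR / (2a²)` at `s = a²`, so `G` and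
hence `U` are C¹. For any such `U`, `U_xx = 2G' + 4x²G''` and `U_yy = 2G' + 4y²G''`. Inside
`r < a`, `G'' = 0` gives `U_xx - U_yy = 0`; in the annulus `G' = KR/(2s)` gives
`U_xx + U_yy = 4(G' + sG'') = 0`. On the circle, `t ↦ U(t p / R) = G(t²)` has derivative
`2R G'(R²) = K` at `t = R`.
-/

open Real Filter

section RadialSecondDerivatives

variable {G G' : ℝ → ℝ} {G'' : ℝ}

theorem deriv_deriv_comp_sq_add (hG : ∀ s, HasDerivAt G (G' s) s) {d x : ℝ}
    (hG' : HasDerivAt G' G'' (x ^ 2 + d)) :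
    deriv (deriv fun t => G (t ^ 2 + d)) x = 2 * G' (x ^ 2 + d) + 4 * x ^ 2 * G'' := by
  have hsq (t : ℝ) : HasDerivAt (fun t => t ^ 2 + d) (2 * t) t := by
    simpa using (hasDerivAt_pow 2 t).add_const d
  have hfirst : deriv (fun t => G (t ^ 2 + d)) = fun t => G' (t ^ 2 + d) * (2 * t) :=
    funext fun t => ((hG _).comp t (hsq t)).deriv
  rw [hfirst]
  have hsecond : HasDerivAt (fun t => G' (t ^ 2 + d) * (2 * t))
      (G'' * (2 * x) * (2 * x) + G' (x ^ 2 + d) * 2) x :=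
    (hG'.comp x (hsq x)).mul (hasDerivAt_const_mul 2)
  rw [hsecond.deriv]
  ring

theorem pxx_comp_sq_add_sq (hG : ∀ s, HasDerivAt G (G' s) s) {p : ℝ × ℝ}
    (hG' : HasDerivAt G' G'' (p.1 ^ 2 + p.2 ^ 2)) :
    pxx (fun q => G (q.1 ^ 2 + q.2 ^ 2)) p =
      2 * G' (p.1 ^ 2 + p.2 ^ 2) + 4 * p.1 ^ 2 * G'' :=
  deriv_deriv_comp_sq_add hG hG'

theorem pyy_comp_sq_add_sq (hG : ∀ s, HasDerivAt G (G' s) s) {p : ℝ × ℝ}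
    (hG' : HasDerivAt G' G'' (p.1 ^ 2 + p.2 ^ 2)) :
    pyy (fun q => G (q.1 ^ 2 + q.2 ^ 2)) p =
      2 * G' (p.1 ^ 2 + p.2 ^ 2) + 4 * p.2 ^ 2 * G'' := by
  have hswap : (fun y => G (p.1 ^ 2 + y ^ 2)) = fun y => G (y ^ 2 + p.1 ^ 2) := by
    simp only [add_comm]
  have h := deriv_deriv_comp_sq_add hG (d := p.1 ^ 2) (x := p.2) (by rwa [add_comm])
  rw [add_comm (p.2 ^ 2)] at h
  simp only [pyy]
  rw [hswap, h]

end RadialSecondDerivatives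

section RadialProfile

variable {c a s : ℝ}

/-- The solution as a function of `s = r²`, with `c = K R`. -/
noncomputable def radialProfile (c a s : ℝ) : ℝ :=
  if s ≤ a ^ 2 then c / 2 * (s / a ^ 2 - 1) else c * log (√s / a)

theorem radialProfile_of_le_sq (hs : s ≤ a ^ 2) : radialProfile c a s = c / 2 * (s / a ^ 2 - 1) :=
  if_pos hs

theorem radialProfile_of_sq_le (ha : 0 < a) (hs : a ^ 2 ≤ s) :
    radialProfile c a s = c * (log s / 2 - log a) := by
  have hs0 : 0 < s := (pow_pos ha 2).trans_le hs
  rcases hs.eq_or_lt with rfl | hlt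
  · rw [radialProfile_of_le_sq le_rfl, div_self (pow_pos ha 2).ne', log_pow]
    push_cast
    ring
  · rw [radialProfile, if_neg hlt.not_ge, log_div (sqrt_pos.2 hs0).ne' ha.ne', log_sqrt hs0.le]

theorem radialProfile_neg (hc : 0 < c) (ha : 0 < a) (hs : s < a ^ 2) :
    radialProfile c a s < 0 := by
  rw [radialProfile_of_le_sq hs.le]
  have : s / a ^ 2 < 1 := (div_lt_one (pow_pos ha 2)).2 hs
  nlinarith

theorem radialProfile_pos (hc : 0 < c) (ha : 0 < a) (hs : a ^ 2 < s) :
    0 < radialProfile c a s := by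
  rw [radialProfile, if_neg hs.not_ge]
  have : 1 < √s / a := (one_lt_div ha).2 ((lt_sqrt ha.le).2 hs)
  exact mul_pos hc (log_pos this)

theorem hasDerivAt_radialProfile (ha : 0 < a) (s : ℝ) :
    HasDerivAt (radialProfile c a) (c / (2 * max (a ^ 2) s)) s := by
  have ha2 : 0 < a ^ 2 := pow_pos ha 2
  have hquad (t : ℝ) : HasDerivAt (fun t => c / 2 * (t / a ^ 2 - 1)) (c / (2 * a ^ 2)) t :=
    ((((hasDerivAt_id' t).div_const (a ^ 2)).sub_const 1).const_mul (c / 2)).congr_deriv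
      (by ring)
  have hlog {t : ℝ} (ht : 0 < t) :
      HasDerivAt (fun t => c * (log t / 2 - log a)) (c / (2 * t)) t :=
    ((((hasDerivAt_log ht.ne').div_const 2).sub_const (log a)).const_mul c).congr_deriv
      (by ring)
  rcases lt_trichotomy s (a ^ 2) with hs | rfl | hs
  · rw [max_eq_left hs.le]
    exact (hquad s).congr_of_eventuallyEq <|
      (eventually_lt_nhds hs).mono fun t ht => radialProfile_of_le_sq ht.le
  · rw [max_self]
    have hleft : HasDerivWithinAt (radialProfile c a) (c / (2 * a ^ 2)) (Set.Iic (a ^ 2)) (a ^ 2) :=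
      (hquad _).hasDerivWithinAt.congr (fun t ht => radialProfile_of_le_sq ht)
        (radialProfile_of_le_sq le_rfl)
    have hright :
        HasDerivWithinAt (radialProfile c a) (c / (2 * a ^ 2)) (Set.Ici (a ^ 2)) (a ^ 2) :=
      (hlog ha2).hasDerivWithinAt.congr (fun t ht => radialProfile_of_sq_le ha ht)
        (radialProfile_of_sq_le ha le_rfl)
    simpa only [Set.Iic_union_Ici, hasDerivWithinAt_univ] using hleft.union hright
  · rw [max_eq_right hs.le]
    exact (hlog (ha2.trans hs)).congr_of_eventuallyEq <|
      (eventually_gt_nhds hs).mono fun t ht => radialProfile_of_sq_le ha ht.le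

theorem contDiff_radialProfile (ha : 0 < a) : ContDiff ℝ 1 (radialProfile c a) := by
  rw [contDiff_one_iff_deriv]
  refine ⟨fun s => (hasDerivAt_radialProfile ha s).differentiableAt, ?_⟩
  rw [show deriv (radialProfile c a) = fun s => c / (2 * max (a ^ 2) s) from
    funext fun s => (hasDerivAt_radialProfile ha s).deriv]
  exact continuous_const.div (by fun_prop) fun s => by positivity

theorem hasDerivAt_radialProfile_slope_of_lt (hs : s < a ^ 2) :
    HasDerivAt (fun s => c / (2 * max (a ^ 2) s)) 0 s :=
  (hasDerivAt_const s (c / (2 * a ^ 2))).congr_of_eventuallyEq <|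
    (eventually_lt_nhds hs).mono fun t ht => by simp only [max_eq_left ht.le]

theorem hasDerivAt_radialProfile_slope_of_gt (hs : a ^ 2 < s) :
    HasDerivAt (fun s => c / (2 * max (a ^ 2) s)) (-(c / (2 * s ^ 2))) s := by
  have hs0 : 0 < s := (sq_nonneg a).trans_lt hs
  have hinv : HasDerivAt (fun s => c / 2 * s⁻¹) (-(c / (2 * s ^ 2))) s :=
    ((hasDerivAt_inv hs0.ne').const_mul (c / 2)).congr_deriv (by ring)
  exact hinv.congr_of_eventuallyEq <|
    (eventually_gt_nhds hs).mono fun t ht => by simp only [max_eq_right ht.le]; ring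

end RadialProfile

/-- The piecewise function `U = (KR/2)(r²/a² - 1)` for `r ≤ a`,
`U = KR ln(r/a)` for `a ≤ r ≤ R` is a type-changing solution of the Neumann
problem for equation (1) with constant boundary flux `K > 0`: it is C¹ in the
open disk `r < R`, negative and a wave-equation solution in `r < a`, positive
and harmonic in `a < r < R`, and the outward radial derivative `∂U/∂r` equals
`K` on the boundary circle `r = R` (the radial derivative at a boundary point
`p` is the derivative of `t ↦ U(t·p/R)` at `t = R`). -/
theorem model_neumann_eq1_type_changing
    (R K a : ℝ) (hR : 0 < R) (hK : 0 < K) (ha : a ∈ Set.Ioo 0 R)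
    (U : ℝ × ℝ → ℝ)
    (hU : ∀ p : ℝ × ℝ, U p =
      if p.1 ^ 2 + p.2 ^ 2 ≤ a ^ 2 then
        K * R / 2 * ((p.1 ^ 2 + p.2 ^ 2) / a ^ 2 - 1)
      else
        K * R * Real.log (Real.sqrt (p.1 ^ 2 + p.2 ^ 2) / a)) :
    ContDiffOn ℝ 1 U {p : ℝ × ℝ | p.1 ^ 2 + p.2 ^ 2 < R ^ 2} ∧
    (∀ p : ℝ × ℝ, p.1 ^ 2 + p.2 ^ 2 < a ^ 2 →
      U p < 0 ∧ pxx U p - pyy U p = 0) ∧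
    (∀ p : ℝ × ℝ, a ^ 2 < p.1 ^ 2 + p.2 ^ 2 → p.1 ^ 2 + p.2 ^ 2 < R ^ 2 →
      0 < U p ∧ pxx U p + pyy U p = 0) ∧
    (∀ p : ℝ × ℝ, p.1 ^ 2 + p.2 ^ 2 = R ^ 2 →
      deriv (fun t : ℝ => U (t / R * p.1, t / R * p.2)) R = K) := by
  obtain ⟨ha0, haR⟩ := ha
  have hKR : 0 < K * R := mul_pos hK hR
  obtain rfl : U = fun p => radialProfile (K * R) a (p.1 ^ 2 + p.2 ^ 2) := funext hU
  have hG := hasDerivAt_radialProfile (c := K * R) ha0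
  refine ⟨(contDiff_radialProfile ha0).comp (by fun_prop) |>.contDiffOn, fun p hp => ?_,
    fun p hp hpR => ?_, fun p hp => ?_⟩
  · have hG' := hasDerivAt_radialProfile_slope_of_lt (c := K * R) hp
    refine ⟨radialProfile_neg hKR ha0 hp, ?_⟩
    rw [pxx_comp_sq_add_sq hG hG', pyy_comp_sq_add_sq hG hG']
    ring
  · have hG' := hasDerivAt_radialProfile_slope_of_gt (c := K * R) hp
    refine ⟨radialProfile_pos hKR ha0 hp, ?_⟩
    rw [pxx_comp_sq_add_sq hG hG', pyy_comp_sq_add_sq hG hG', max_eq_right hp.le]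
    field_simp
    ring
  · have hray : (fun t : ℝ => radialProfile (K * R) a ((t / R * p.1) ^ 2 + (t / R * p.2) ^ 2)) =
        fun t => radialProfile (K * R) a (t ^ 2) := by
      funext t
      rw [show (t / R * p.1) ^ 2 + (t / R * p.2) ^ 2 = (t / R) ^ 2 * (p.1 ^ 2 + p.2 ^ 2) by ring,
        hp, div_pow, div_mul_cancel₀ _ (pow_ne_zero 2 hR.ne')]
    have hRa : a ^ 2 ≤ R ^ 2 := pow_le_pow_left₀ ha0.le haR.le 2
    rw [hray]
    refine ((hG _).comp R (hasDerivAt_pow 2 R)).deriv.trans ?_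
    rw [max_eq_right hRa]
    push_cast
    field_simp
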